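/- For every C¹ function f : U → ℍ on an open set U ⊆ ℍ and every x ∈ U, the quaternion-valued 4-form identity Dq ∧ df(x) = −(D_ℓ f)(x)·v holds, where v = dx¹∧dx²∧dx³∧dx⁴ is the volume form. -/

import Mathlib

/-!
A top-degree alternating map on `ℍ` is determined by its value on the basis `1, i, j, k`, so it
suffices to evaluate both sides there. Expanding a wedge with a 1-form `β` along the last slot,
`(Dq ∧ β)(e₁, e₂, e₃, e₄) = Dq(e₁, e₂, e₃) β(e₄) - ∑ₖ Dq(e₁, e₂, e₃ with eₖ replaced by e₄) β(eₖ)`,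
and `Dq` takes the values `-e₄` and `eₖ` on these triples, which gives `-∑ₖ eₖ β(eₖ)`.
-/

open scoped Quaternion

noncomputable section

/-- The standard basis `e₁ = 1, e₂ = i, e₃ = j, e₄ = k` of the quaternions. -/
def e : Fin 4 → ℍ[ℝ] := ![1, ⟨0,1,0,0⟩, ⟨0,0,1,0⟩, ⟨0,0,0,1⟩]

/-- The real coordinates of a quaternion. -/
def toTuple (x : ℍ[ℝ]) : Fin 4 → ℝ := ![x.re, x.imI, x.imJ, x.imK]

/-- The coordinate functional `dxⁱ : ℍ → ℝ`. -/
def coord (i : Fin 4) : ℍ[ℝ] →ₗ[ℝ] ℝ :=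
  (LinearMap.proj i).comp (QuaternionAlgebra.linearEquivTuple (-1 : ℝ) (0 : ℝ) (-1 : ℝ)).toLinearMap

/-- A quaternion-valued `m`-form (at a point). -/
abbrev QForm (m : ℕ) := AlternatingMap ℝ ℍ[ℝ] ℍ[ℝ] (Fin m)

/-- The wedge product of quaternion-valued forms, via `AlternatingMap.domCoprod`
composed with quaternion multiplication and reindexed along `Fin m ⊕ Fin n ≃ Fin (m+n)`. -/
def wedge {m n : ℕ} (α : QForm m) (β : QForm n) : QForm (m + n) :=
  ((LinearMap.mul' ℝ ℍ[ℝ]).compAlternatingMap (α.domCoprod β)).domDomCongr finSumFinEquiv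

/-- Left multiplication of a quaternion-valued form by a quaternion. -/
def qsmul (q : ℍ[ℝ]) {m : ℕ} (γ : QForm m) : QForm m :=
  (LinearMap.mulLeft ℝ q).compAlternatingMap γ

/-- Right multiplication of a quaternion-valued form by a quaternion. -/
def qsmulR (q : ℍ[ℝ]) {m : ℕ} (γ : QForm m) : QForm m :=
  (LinearMap.mulRight ℝ q).compAlternatingMap γ

/-- The quaternion-valued 1-form `dxⁱ` (real-valued, regarded as ℍ-valued). -/
def dx (i : Fin 4) : QForm 1 :=
  AlternatingMap.ofSubsingleton ℝ ℍ[ℝ] ℍ[ℝ] 0 ((Algebra.linearMap ℝ ℍ[ℝ]).comp (coord i))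

/-- `dxⁱ ∧ dxʲ ∧ dxᵏ`. -/
def w3 (i j k : Fin 4) : QForm 3 := wedge (wedge (dx i) (dx j)) (dx k)

/-- The volume form `v = dx¹∧dx²∧dx³∧dx⁴`. -/
def vol : QForm 4 := wedge (wedge (wedge (dx 0) (dx 1)) (dx 2)) (dx 3)

/-- The differential `df(x)` of `f : ℍ → ℍ` at `x`, as a quaternion-valued 1-form. -/
def dform (f : ℍ[ℝ] → ℍ[ℝ]) (x : ℍ[ℝ]) : QForm 1 :=
  AlternatingMap.ofSubsingleton ℝ ℍ[ℝ] ℍ[ℝ] 0 (fderiv ℝ f x).toLinearMap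

/-- The 3-form `Dq`. -/
def Dq : QForm 3 :=
  qsmul (e 0) (w3 1 2 3) - qsmul (e 1) (w3 0 2 3) + qsmul (e 2) (w3 0 1 3) - qsmul (e 3) (w3 0 1 2)

open Equiv

theorem AlternatingMap.eq_of_apply_basis {R M N ι : Type*} [CommRing R] [AddCommGroup M]
    [Module R M] [AddCommGroup N] [Module R N] [Fintype ι] [DecidableEq ι]
    (b : Module.Basis ι R M) {f g : M [⋀^ι]→ₗ[R] N} (h : f b = g b) : f = g := by
  refine b.ext_alternating fun v hv => ?_
  let σ : Perm ι := .ofBijective v (Finite.injective_iff_bijective.1 hv)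
  change f (b ∘ σ) = g (b ∘ σ)
  rw [f.map_perm, g.map_perm, h]

namespace Equiv.Perm

variable {ι κ : Type*} [Unique κ]

theorem mem_sumCongrHom_range_of_apply_inr [Finite ι] {σ : Perm (ι ⊕ κ)}
    (h : σ (.inr default) = .inr default) : σ ∈ (sumCongrHom ι κ).range := by
  refine mem_sumCongrHom_range_of_perm_mapsTo_inl ?_
  rintro _ ⟨a, rfl⟩
  rcases hσ : σ (.inl a) with b | c
  · exact ⟨b, rfl⟩
  · rw [Unique.eq_default c, ← h] at hσ
    exact absurd (σ.injective hσ) Sum.inl_ne_inr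

/-- The class of `σ` is determined by `σ (inr default)`; transpositions give representatives. -/
def modSumCongrEquivOfUnique [Finite ι] [DecidableEq ι] [DecidableEq κ] :
    (ι ⊕ κ) ≃ ModSumCongr ι κ where
  toFun j := Quotient.mk'' (swap j (.inr default))
  invFun := Quotient.lift (fun σ => σ (.inr default)) fun σ τ hστ => by
    obtain ⟨⟨p, q⟩, hpq⟩ := QuotientGroup.leftRel_apply.mp hστ
    rw [inv_mul_eq_iff_eq_mul.mp hpq.symm]
    simp [Unique.eq_default (q default)]
  left_inv j := by simp
  right_inv q := by
    induction q using Quotient.inductionOn' with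
    | h σ =>
      refine Quotient.sound' (QuotientGroup.leftRel_apply.mpr
        (mem_sumCongrHom_range_of_apply_inr ?_))
      simp

end Equiv.Perm

theorem wedge_one_apply_eq_sum_swap {m : ℕ} (α : QForm m) (β : QForm 1)
    (v : Fin (m + 1) → ℍ[ℝ]) :
    wedge α β v = ∑ j : Fin m ⊕ Fin 1,
      Perm.sign (swap j (.inr 0)) • (α (fun i => v (finSumFinEquiv (swap j (.inr 0) (.inl i)))) *
        β (fun i => v (finSumFinEquiv (swap j (.inr 0) (.inr i))))) := by
  change LinearMap.mul' ℝ ℍ[ℝ] ((α.domCoprod β) (v ∘ finSumFinEquiv)) = _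
  rw [AlternatingMap.domCoprod_apply, sum_apply, map_sum,
    ← Perm.modSumCongrEquivOfUnique.sum_comp]
  refine Finset.sum_congr rfl fun j _ => ?_
  rw [Perm.modSumCongrEquivOfUnique, coe_fn_mk, AlternatingMap.domCoprod.summand_mk'']
  simp only [smul_apply, MultilinearMap.domDomCongr_apply, MultilinearMap.domCoprod_apply,
    map_zsmul_unit, LinearMap.mul'_apply, Function.comp_apply, AlternatingMap.coe_multilinearMap]
  rfl

theorem wedge_one_apply {m : ℕ} (α : QForm m) (β : QForm 1) (v : Fin (m + 1) → ℍ[ℝ]) :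
    wedge α β v = α (v ∘ Fin.castSucc) * β (fun _ => v (Fin.last m)) -
      ∑ k : Fin m, α (Function.update (v ∘ Fin.castSucc) k (v (Fin.last m))) *
        β (fun _ => v k.castSucc) := by
  rw [wedge_one_apply_eq_sum_swap, Fintype.sum_sum_type, Fin.sum_univ_one, add_comm,
    sub_eq_add_neg, ← Finset.sum_neg_distrib]
  congr 1
  · simp [Fin.fin_one_eq_zero]
    rfl
  · refine Finset.sum_congr rfl fun k _ => ?_
    rw [Perm.sign_swap Sum.inl_ne_inr, Units.neg_smul, one_smul]
    congr 3
    · funext i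
      rcases eq_or_ne i k with rfl | hik
      · simp
        rfl
      · simp [hik, swap_apply_of_ne_of_ne]
        rfl
    · simp [Fin.fin_one_eq_zero]
      rfl

local notation "basisℍ" =>
  (QuaternionAlgebra.basisOneIJK (-1 : ℝ) 0 (-1) : Module.Basis (Fin 4) ℝ ℍ[ℝ])

theorem coe_basisOneIJK : ⇑basisℍ = e := by
  funext i
  fin_cases i <;> ext <;> simp [QuaternionAlgebra.basisOneIJK, e]

theorem coord_e (i j : Fin 4) : coord i (e j) = if j = i then 1 else 0 := by
  change (basisℍ).repr (e j) i = _
  rw [← coe_basisOneIJK, Module.Basis.repr_self, Finsupp.single_apply]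

theorem QForm.ext_e {α β : QForm 4} (h : α e = β e) : α = β :=
  AlternatingMap.eq_of_apply_basis basisℍ (by rwa [coe_basisOneIJK])

theorem dx_apply (i : Fin 4) (v : Fin 1 → ℍ[ℝ]) : dx i v = coord i (v 0) := rfl

theorem vol_e : vol e = 1 := by
  simp [vol, wedge_one_apply, Fin.sum_univ_succ, dx_apply, coord_e, Function.update_apply]

theorem Dq_e_castSucc : Dq (e ∘ Fin.castSucc) = -e (Fin.last 3) := by
  simp [Dq, qsmul, w3, wedge_one_apply, Fin.sum_univ_succ, dx_apply, coord_e,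
    Function.update_apply]

theorem Dq_update_e_castSucc (k : Fin 3) :
    Dq (Function.update (e ∘ Fin.castSucc) k (e (Fin.last 3))) = e k.castSucc := by
  fin_cases k <;> simp [Dq, qsmul, w3, wedge_one_apply, Fin.sum_univ_succ, dx_apply, coord_e,
    Function.update_apply]

theorem wedge_Dq_e (β : QForm 1) : (wedge Dq β : QForm 4) e = -∑ i, e i * β (fun _ => e i) := by
  rw [wedge_one_apply, Dq_e_castSucc]
  conv_rhs => rw [Fin.sum_univ_castSucc]
  rw [Finset.sum_congr rfl fun k _ => by rw [Dq_update_e_castSucc k], neg_mul]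
  abel

theorem Dq_wedge_df_general (f : ℍ[ℝ] → ℍ[ℝ]) (x : ℍ[ℝ]) :
    wedge Dq (dform f x) =
      qsmul (-(∑ i : Fin 4, e i * fderiv ℝ f x (e i))) vol := by
  refine QForm.ext_e ?_
  rw [wedge_Dq_e, qsmul, LinearMap.compAlternatingMap_apply, LinearMap.mulLeft_apply, vol_e,
    mul_one]
  rfl

/-- `Dq ∧ df(x) = −(D_ℓ f)(x)·v` for `C¹` functions `f` on open sets. -/
theorem Dq_wedge_df (U : Set ℍ[ℝ]) (hU : IsOpen U) (f : ℍ[ℝ] → ℍ[ℝ])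
    (hf : ContDiffOn ℝ 1 f U) (x : ℍ[ℝ]) (hx : x ∈ U) :
    wedge Dq (dform f x) =
      qsmul (-(∑ i : Fin 4, e i * fderiv ℝ f x (e i))) vol :=
  Dq_wedge_df_general f x
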